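/- For any real p ≥ 2 and any integer ℓ ≥ 1, the product over j from 1 to ℓ of 1/(1 - p^(-j)) is strictly less than 1 + 6/p. -/

import Mathlib

/-!
With `x = p⁻¹ ≤ 1/2`, keep the factor `1 - x` and bound the rest of `∏ (1 - x ^ j)` from below by
`1 - ∑_{j ≥ 2} x ^ j`. The geometric tail is strictly less than `x ^ 2 / (1 - x)`, so the product
exceeds `1 - x - x ^ 2`, and `(1 + 6x)(1 - x - x ^ 2) - 1 = x (1 - 2x)(5 + 3x) ≥ 0`.
-/

open Finset

theorem Finset.one_sub_sum_le_prod_one_sub {ι R : Type*} [CommRing R] [PartialOrder R]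
    [IsOrderedRing R] (s : Finset ι) {f : ι → R} (h0 : ∀ i ∈ s, 0 ≤ f i)
    (h1 : ∀ i ∈ s, f i ≤ 1) : 1 - ∑ i ∈ s, f i ≤ ∏ i ∈ s, (1 - f i) := by
  classical
  induction s using Finset.induction_on with
  | empty => simp
  | insert a s ha ih =>
    rw [prod_insert ha, sum_insert ha]
    have hfa : 0 ≤ f a := h0 a (mem_insert_self a s)
    have hfa' : 0 ≤ 1 - f a := sub_nonneg.2 (h1 a (mem_insert_self a s))
    have hsum : 0 ≤ ∑ i ∈ s, f i := sum_nonneg fun i hi => h0 i (mem_insert_of_mem hi)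
    have hprod : 1 - ∑ i ∈ s, f i ≤ ∏ i ∈ s, (1 - f i) :=
      ih (fun i hi => h0 i (mem_insert_of_mem hi)) fun i hi => h1 i (mem_insert_of_mem hi)
    calc 1 - (f a + ∑ i ∈ s, f i)
        ≤ (1 - f a) * (1 - ∑ i ∈ s, f i) := by linear_combination mul_nonneg hfa hsum
      _ ≤ (1 - f a) * ∏ i ∈ s, (1 - f i) := mul_le_mul_of_nonneg_left hprod hfa'

theorem one_sub_sub_sq_lt_prod_one_sub_pow {x : ℝ} (hx₀ : 0 < x) (hx₁ : x ≤ 1) (n : ℕ) :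
    1 - x - x ^ 2 < ∏ i ∈ range (n + 1), (1 - x ^ (i + 1)) := by
  have htail : 1 - ∑ i ∈ range n, x ^ (i + 2) ≤ ∏ i ∈ range n, (1 - x ^ (i + 2)) :=
    one_sub_sum_le_prod_one_sub _ (fun i _ => by positivity)
      fun i _ => pow_le_one₀ hx₀.le hx₁
  have hgeom : (1 - x) * ∑ i ∈ range n, x ^ (i + 2) = x ^ 2 * (1 - x ^ n) := by
    simp_rw [pow_add, ← sum_mul, ← mul_assoc, mul_neg_geom_sum]
    ring
  have hxn : 0 < x ^ 2 * x ^ n := by positivity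
  rw [prod_range_succ', zero_add, pow_one]
  calc 1 - x - x ^ 2
      < (1 - x) * (1 - ∑ i ∈ range n, x ^ (i + 2)) := by linarith
    _ ≤ (1 - x) * ∏ i ∈ range n, (1 - x ^ (i + 2)) :=
        mul_le_mul_of_nonneg_left htail (sub_nonneg.2 hx₁)
    _ = (∏ i ∈ range n, (1 - x ^ (i + 1 + 1))) * (1 - x) := by rw [mul_comm]

theorem inv_one_sub_sub_sq_le {x : ℝ} (hx₀ : 0 ≤ x) (hx : x ≤ 1 / 2) :
    (1 - x - x ^ 2)⁻¹ ≤ 1 + 6 * x := by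
  rw [inv_le_iff_one_le_mul₀ (by nlinarith)]
  nlinarith [mul_nonneg hx₀ (mul_nonneg (by linarith : (0 : ℝ) ≤ 1 - 2 * x)
    (by linarith : (0 : ℝ) ≤ 5 + 3 * x))]

/-- For any real `p ≥ 2` and integer `ℓ ≥ 1`,
`∏_{j=1}^{ℓ} 1/(1 - p^(-j)) < 1 + 6/p`. -/
theorem prod_one_sub_inv_lt (p : ℝ) (hp : 2 ≤ p) (ℓ : ℕ) (hℓ : 1 ≤ ℓ) :
    ∏ j ∈ Finset.Icc 1 ℓ, (1 - (p ^ j)⁻¹)⁻¹ < 1 + 6 / p := by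
  obtain ⟨n, rfl⟩ : ∃ n, ℓ = n + 1 := ⟨ℓ - 1, by omega⟩
  have hx₀ : 0 < p⁻¹ := by positivity
  have hx₂ : p⁻¹ ≤ 1 / 2 := by rw [one_div]; exact inv_anti₀ two_pos hp
  have hlower := one_sub_sub_sq_lt_prod_one_sub_pow hx₀ (by linarith) n
  rw [range_eq_Ico, prod_Ico_add' (fun j => 1 - p⁻¹ ^ j), zero_add,
    Ico_add_one_right_eq_Icc] at hlower
  simp_rw [← inv_pow, prod_inv_distrib, div_eq_mul_inv]
  calc (∏ j ∈ Icc 1 (n + 1), (1 - p⁻¹ ^ j))⁻¹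
      < (1 - p⁻¹ - p⁻¹ ^ 2)⁻¹ := inv_strictAnti₀ (by nlinarith) hlower
    _ ≤ 1 + 6 * p⁻¹ := inv_one_sub_sub_sq_le hx₀.le hx₂
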